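/- Let G₁ and G₂ be two simple directed graphs realizing the same bi-degree sequence with e total edges. Then G₁ can be transformed into G₂ by a sequence of at most 2e two-edge or three-edge swaps, through realizations of the same bi-degree sequence. -/

import Mathlib

/-- Out-degree of `v` in the digraph with (boolean) adjacency `E`. -/
def outDeg {n : ℕ} (E : Fin n → Fin n → Bool) (v : Fin n) : ℕ :=
  (Finset.univ.filter (fun w => E v w = true)).card

/-- In-degree of `v` in the digraph with (boolean) adjacency `E`. -/
def inDeg {n : ℕ} (E : Fin n → Fin n → Bool) (v : Fin n) : ℕ :=
  (Finset.univ.filter (fun w => E w v = true)).card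

/-- `E` is a simple directed graph (no loops; at most one edge in each
direction) realizing the bi-degree sequence `(dp, dm)`. -/
def Realizes {n : ℕ} (E : Fin n → Fin n → Bool) (dp dm : Fin n → ℕ) : Prop :=
  (∀ v, E v v = false) ∧ ∀ v, outDeg E v = dp v ∧ inDeg E v = dm v

/-- A bi-degree sequence is bi-graphical if some simple digraph realizes it. -/
def BiGraphical (n : ℕ) (dp dm : Fin n → ℕ) : Prop :=
  ∃ E : Fin n → Fin n → Bool, Realizes E dp dm

/-- A two-edge swap: the edges `a→b`, `c→d` (present) are replaced by `a→d`,
`c→b` (previously absent, non-loops). -/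
def TwoSwap {n : ℕ} (E E' : Fin n → Fin n → Bool) : Prop :=
  ∃ a b c d : Fin n,
    a ≠ b ∧ c ≠ d ∧ a ≠ d ∧ c ≠ b ∧
    E a b = true ∧ E c d = true ∧ E a d = false ∧ E c b = false ∧
    ∀ x y, E' x y =
      (if (x = a ∧ y = b) ∨ (x = c ∧ y = d) then false
       else if (x = a ∧ y = d) ∨ (x = c ∧ y = b) then true
       else E x y)

/-- A three-edge swap: the directed triangle `a→b→c→a` is reversed
(its reversal being previously absent). -/
def ThreeSwap {n : ℕ} (E E' : Fin n → Fin n → Bool) : Prop :=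
  ∃ a b c : Fin n,
    a ≠ b ∧ b ≠ c ∧ a ≠ c ∧
    E a b = true ∧ E b c = true ∧ E c a = true ∧
    E b a = false ∧ E c b = false ∧ E a c = false ∧
    ∀ x y, E' x y =
      (if (x = a ∧ y = b) ∨ (x = b ∧ y = c) ∨ (x = c ∧ y = a) then false
       else if (x = b ∧ y = a) ∨ (x = c ∧ y = b) ∨ (x = a ∧ y = c) then true
       else E x y)

/-- A swap is a two-edge swap or a three-edge swap. -/
def Swap {n : ℕ} (E E' : Fin n → Fin n → Bool) : Prop :=
  TwoSwap E E' ∨ ThreeSwap E E'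

/-!
Flipping every cell of a set `S` of ordered pairs preserves all out- and in-degrees as soon as
each row and each column of `S` contains as many edges as non-edges: a two-edge swap flips such
a `2 × 2` set, a three-edge swap the six cells of a directed triangle and its reverse. Flipping
`S` changes the number of pairs on which two realizations `A`, `B` disagree by the number of
agreeing minus disagreeing cells of `S`. At most `2e` pairs disagree, so it suffices to find,
whenever `A ≠ B`, a swap of `A` or of `B` (swaps are reversible) that lowers this number.

Equal degrees make the cells of `A \ B` and `B \ A` form alternating cycles: along a row a cell
of `A \ B` is followed by one of `B \ A`, along a column the other way round. On a shortest
alternating cycle, look at the two chords joining consecutive cells. Either one of them allows a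
two-edge swap in `A` or in `B` that repairs three of its four cells, or it would close a shorter
alternating cycle, or both chords are loops. If all chords are loops, the cycle is a directed
triangle of `A` whose reverse lies in `B`, and reversing it repairs six cells.
-/

open Finset

variable {n : ℕ} {E E' E'' A B : Fin n → Fin n → Bool} {S : Finset (Fin n × Fin n)}
  {dp dm : Fin n → ℕ}

def toggle (E : Fin n → Fin n → Bool) (S : Finset (Fin n × Fin n)) :
    Fin n → Fin n → Bool :=
  fun x y => if (x, y) ∈ S then !E x y else E x y

def edgeDist (A B : Fin n → Fin n → Bool) : ℕ :=
  hammingDist (Function.uncurry A) (Function.uncurry B)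

lemma toggle_toggle (E : Fin n → Fin n → Bool) (S : Finset (Fin n × Fin n)) :
    toggle (toggle E S) S = E := by
  ext x y
  by_cases h : (x, y) ∈ S <;> simp [toggle, h]

lemma edgeDist_comm (A B : Fin n → Fin n → Bool) : edgeDist A B = edgeDist B A :=
  hammingDist_comm _ _

lemma edgeDist_toggle (A B : Fin n → Fin n → Bool) (S : Finset (Fin n × Fin n)) :
    (edgeDist (toggle A S) B : ℤ) =
      edgeDist A B + ∑ p ∈ S, if A p.1 p.2 = B p.1 p.2 then 1 else -1 := by
  simp only [edgeDist, hammingDist, natCast_card_filter]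
  rw [← univ_inter S, ← sum_ite_mem, ← sum_add_distrib]
  refine sum_congr rfl fun ⟨x, y⟩ _ => ?_
  simp only [toggle, Function.uncurry_apply_pair, univ_inter]
  by_cases hp : (x, y) ∈ S <;>
    rcases Bool.eq_false_or_eq_true (A x y) with h | h <;>
    rcases Bool.eq_false_or_eq_true (B x y) with h' | h' <;> simp [hp, h, h']

lemma sum_ite_fst_eq (S : Finset (Fin n × Fin n)) (g : Fin n → Fin n → ℤ) (v : Fin n) :
    ∑ p ∈ S, (if p.1 = v then g p.1 p.2 else 0) = ∑ w, if (v, w) ∈ S then g v w else 0 := by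
  rw [← univ_inter S, ← sum_ite_mem, Fintype.sum_prod_type,
    sum_eq_single v (fun x _ hx => by simp [hx]) (by simp)]
  simp

lemma sum_ite_snd_eq (S : Finset (Fin n × Fin n)) (g : Fin n → Fin n → ℤ) (v : Fin n) :
    ∑ p ∈ S, (if p.2 = v then g p.1 p.2 else 0) = ∑ w, if (w, v) ∈ S then g w v else 0 := by
  rw [← univ_inter S, ← sum_ite_mem, Fintype.sum_prod_type_right,
    sum_eq_single v (fun x _ hx => by simp [hx]) (by simp)]
  simp

lemma outDeg_toggle (E : Fin n → Fin n → Bool) (S : Finset (Fin n × Fin n)) (v : Fin n) :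
    (outDeg (toggle E S) v : ℤ) =
      outDeg E v - ∑ p ∈ S, if p.1 = v then (if E p.1 p.2 then 1 else -1) else 0 := by
  simp only [outDeg, natCast_card_filter]
  rw [sum_ite_fst_eq S (fun x y => if E x y then 1 else -1), eq_sub_iff_add_eq,
    ← sum_add_distrib]
  refine sum_congr rfl fun w _ => ?_
  by_cases hp : (v, w) ∈ S <;> rcases Bool.eq_false_or_eq_true (E v w) with h | h <;>
    simp [toggle, hp, h]

lemma inDeg_toggle (E : Fin n → Fin n → Bool) (S : Finset (Fin n × Fin n)) (v : Fin n) :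
    (inDeg (toggle E S) v : ℤ) =
      inDeg E v - ∑ p ∈ S, if p.2 = v then (if E p.1 p.2 then 1 else -1) else 0 := by
  simp only [inDeg, natCast_card_filter]
  rw [sum_ite_snd_eq S (fun x y => if E x y then 1 else -1), eq_sub_iff_add_eq,
    ← sum_add_distrib]
  refine sum_congr rfl fun w _ => ?_
  by_cases hp : (w, v) ∈ S <;> rcases Bool.eq_false_or_eq_true (E w v) with h | h <;>
    simp [toggle, hp, h]

lemma Realizes.toggle_of_balanced (hE : Realizes E dp dm) (hloop : ∀ v, (v, v) ∉ S)
    (hrow : ∀ v, ∑ p ∈ S, (if p.1 = v then (if E p.1 p.2 then 1 else -1) else 0 : ℤ) = 0)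
    (hcol : ∀ v, ∑ p ∈ S, (if p.2 = v then (if E p.1 p.2 then 1 else -1) else 0 : ℤ) = 0) :
    Realizes (toggle E S) dp dm := by
  refine ⟨fun v => by simp [toggle, hloop, hE.1], fun v => ⟨?_, ?_⟩⟩
  · have := outDeg_toggle E S v
    rw [hrow, (hE.2 v).1] at this
    omega
  · have := inDeg_toggle E S v
    rw [hcol, (hE.2 v).2] at this
    omega

def twoSwapCells (a b c d : Fin n) : Finset (Fin n × Fin n) := {(a, b), (c, d), (a, d), (c, b)}

def triangleCells (a b c : Fin n) : Finset (Fin n × Fin n) :=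
  {(a, b), (b, c), (c, a), (b, a), (c, b), (a, c)}

section Swaps

variable {a b c d : Fin n}

lemma toggle_twoSwapCells_apply (h1 : E a b = true) (h2 : E c d = true) (h3 : E a d = false)
    (h4 : E c b = false) (x y : Fin n) :
    toggle E (twoSwapCells a b c d) x y =
      if (x = a ∧ y = b) ∨ (x = c ∧ y = d) then false
      else if (x = a ∧ y = d) ∨ (x = c ∧ y = b) then true
      else E x y := by
  simp only [toggle, twoSwapCells, mem_insert, mem_singleton, Prod.mk.injEq]
  grind

lemma toggle_triangleCells_apply (h1 : E a b = true) (h2 : E b c = true) (h3 : E c a = true)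
    (h4 : E b a = false) (h5 : E c b = false) (h6 : E a c = false) (x y : Fin n) :
    toggle E (triangleCells a b c) x y =
      if (x = a ∧ y = b) ∨ (x = b ∧ y = c) ∨ (x = c ∧ y = a) then false
      else if (x = b ∧ y = a) ∨ (x = c ∧ y = b) ∨ (x = a ∧ y = c) then true
      else E x y := by
  simp only [toggle, triangleCells, mem_insert, mem_singleton, Prod.mk.injEq]
  grind

lemma twoSwap_toggle (hab : a ≠ b) (hcd : c ≠ d) (had : a ≠ d) (hcb : c ≠ b)
    (h1 : E a b = true) (h2 : E c d = true) (h3 : E a d = false) (h4 : E c b = false) :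
    TwoSwap E (toggle E (twoSwapCells a b c d)) :=
  ⟨a, b, c, d, hab, hcd, had, hcb, h1, h2, h3, h4, toggle_twoSwapCells_apply h1 h2 h3 h4⟩

lemma threeSwap_toggle (hab : a ≠ b) (hbc : b ≠ c) (hac : a ≠ c)
    (h1 : E a b = true) (h2 : E b c = true) (h3 : E c a = true)
    (h4 : E b a = false) (h5 : E c b = false) (h6 : E a c = false) :
    ThreeSwap E (toggle E (triangleCells a b c)) :=
  ⟨a, b, c, hab, hbc, hac, h1, h2, h3, h4, h5, h6, toggle_triangleCells_apply h1 h2 h3 h4 h5 h6⟩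

lemma TwoSwap.symm (h : TwoSwap E E') : TwoSwap E' E := by
  obtain ⟨a, b, c, d, hab, hcd, had, hcb, h1, h2, h3, h4, hE'⟩ := h
  obtain rfl : E' = toggle E (twoSwapCells a b c d) :=
    funext₂ fun x y => (hE' x y).trans (toggle_twoSwapCells_apply h1 h2 h3 h4 x y).symm
  have hS : twoSwapCells a d c b = twoSwapCells a b c d := by
    ext; simp only [twoSwapCells, mem_insert, mem_singleton]; tauto
  have := twoSwap_toggle (E := toggle E (twoSwapCells a b c d)) had hcb hab hcd
    (by simp [toggle, twoSwapCells, h3]) (by simp [toggle, twoSwapCells, h4])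
    (by simp [toggle, twoSwapCells, h1]) (by simp [toggle, twoSwapCells, h2])
  rwa [hS, toggle_toggle] at this

lemma ThreeSwap.symm (h : ThreeSwap E E') : ThreeSwap E' E := by
  obtain ⟨a, b, c, hab, hbc, hac, h1, h2, h3, h4, h5, h6, hE'⟩ := h
  obtain rfl : E' = toggle E (triangleCells a b c) :=
    funext₂ fun x y => (hE' x y).trans (toggle_triangleCells_apply h1 h2 h3 h4 h5 h6 x y).symm
  have hS : triangleCells a c b = triangleCells a b c := by
    ext; simp only [triangleCells, mem_insert, mem_singleton]; tauto
  have := threeSwap_toggle (E := toggle E (triangleCells a b c)) hac hbc.symm hab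
    (by simp [toggle, triangleCells, h6]) (by simp [toggle, triangleCells, h5])
    (by simp [toggle, triangleCells, h4]) (by simp [toggle, triangleCells, h3])
    (by simp [toggle, triangleCells, h2]) (by simp [toggle, triangleCells, h1])
  rwa [hS, toggle_toggle] at this

lemma Swap.symm (h : Swap E E') : Swap E' E := h.imp TwoSwap.symm ThreeSwap.symm

lemma Realizes.ne_of_adj (hE : Realizes E dp dm) {x y : Fin n} (h : E x y = true) : x ≠ y := by
  rintro rfl
  simp [hE.1 x] at h

lemma Realizes.toggle_twoSwapCells (hE : Realizes E dp dm) (had : a ≠ d) (hcb : c ≠ b)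
    (h1 : E a b = true) (h2 : E c d = true) (h3 : E a d = false) (h4 : E c b = false) :
    Realizes (toggle E (twoSwapCells a b c d)) dp dm := by
  have hab := hE.ne_of_adj h1
  have hcd := hE.ne_of_adj h2
  have hac : a ≠ c := by rintro rfl; simp [h2] at h3
  have hbd : b ≠ d := by rintro rfl; simp [h1] at h3
  refine hE.toggle_of_balanced (fun v => ?_) (fun v => ?_) (fun v => ?_)
  · simp only [twoSwapCells, mem_insert, mem_singleton, Prod.mk.injEq]
    grind
  all_goals
    simp [twoSwapCells, sum_insert, hac, hbd, hac.symm, hbd.symm, h1, h2, h3, h4]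
    split_ifs <;> simp

lemma Realizes.toggle_triangleCells (hE : Realizes E dp dm)
    (h1 : E a b = true) (h2 : E b c = true) (h3 : E c a = true)
    (h4 : E b a = false) (h5 : E c b = false) (h6 : E a c = false) :
    Realizes (toggle E (triangleCells a b c)) dp dm := by
  have hab := hE.ne_of_adj h1
  have hbc := hE.ne_of_adj h2
  have hca := hE.ne_of_adj h3
  refine hE.toggle_of_balanced (fun v => ?_) (fun v => ?_) (fun v => ?_)
  · simp only [triangleCells, mem_insert, mem_singleton, Prod.mk.injEq]
    grind
  all_goals
    simp [triangleCells, sum_insert, hab, hbc, hca, hab.symm, hbc.symm, hca.symm,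
      h1, h2, h3, h4, h5, h6]
    split_ifs <;> simp

def CloserSwap (A B : Fin n → Fin n → Bool) (dp dm : Fin n → ℕ) : Prop :=
  ∃ A', Swap A A' ∧ Realizes A' dp dm ∧ edgeDist A' B < edgeDist A B

lemma closerSwap_of_twoSwap (hA : Realizes A dp dm) (had : a ≠ d) (hcb : c ≠ b)
    (h1 : A a b = true) (h2 : A c d = true) (h3 : A a d = false) (h4 : A c b = false)
    (hB1 : B a b = false) (hB3 : B a d = true) (hB : B c d = false ∨ B c b = true) :
    CloserSwap A B dp dm := by
  have hac : a ≠ c := by rintro rfl; simp [h2] at h3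
  have hbd : b ≠ d := by rintro rfl; simp [h1] at h3
  refine ⟨_, Or.inl (twoSwap_toggle (hA.ne_of_adj h1) (hA.ne_of_adj h2) had hcb h1 h2 h3 h4),
    hA.toggle_twoSwapCells had hcb h1 h2 h3 h4, ?_⟩
  have hsum :
      ∑ p ∈ twoSwapCells a b c d, (if A p.1 p.2 = B p.1 p.2 then 1 else -1 : ℤ) < 0 := by
    rcases hB with h | h <;>
      simp [twoSwapCells, sum_insert, hac, hbd, hac.symm, hbd.symm, h, h1, h2, h3, h4, hB1, hB3] <;>
      split <;> norm_num
  have := edgeDist_toggle A B (twoSwapCells a b c d)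
  omega

lemma closerSwap_of_triangle (hA : Realizes A dp dm)
    (h1 : A a b = true) (h2 : A b c = true) (h3 : A c a = true)
    (h4 : A b a = false) (h5 : A c b = false) (h6 : A a c = false)
    (hB1 : B a b = false) (hB2 : B b c = false) (hB3 : B c a = false)
    (hB4 : B b a = true) (hB5 : B c b = true) (hB6 : B a c = true) :
    CloserSwap A B dp dm := by
  have hab := hA.ne_of_adj h1
  have hbc := hA.ne_of_adj h2
  have hca := hA.ne_of_adj h3
  refine ⟨_, Or.inr (threeSwap_toggle hab hbc hca.symm h1 h2 h3 h4 h5 h6),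
    hA.toggle_triangleCells h1 h2 h3 h4 h5 h6, ?_⟩
  have hsum :
      ∑ p ∈ triangleCells a b c, (if A p.1 p.2 = B p.1 p.2 then 1 else -1 : ℤ) < 0 := by
    simp [triangleCells, sum_insert, hab, hbc, hca, hab.symm, hbc.symm, hca.symm,
      h1, h2, h3, h4, h5, h6, hB1, hB2, hB3, hB4, hB5, hB6]
  have := edgeDist_toggle A B (triangleCells a b c)
  omega

end Swaps

structure IsAltCycle (A B : Fin n → Fin n → Bool) (k : ℕ) (a b : ℕ → Fin n) : Prop where
  periodic_b : Function.Periodic b k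
  plus : ∀ t, A (a t) (b t) = true ∧ B (a t) (b t) = false
  minus : ∀ t, A (a t) (b (t + 1)) = false ∧ B (a t) (b (t + 1)) = true

namespace IsAltCycle

variable {k : ℕ} {a b : ℕ → Fin n}

lemma two_le (hc : IsAltCycle A B k a b) (hk : 0 < k) : 2 ≤ k := by
  by_contra! hk1
  obtain rfl : k = 1 := by omega
  have h := (hc.minus 0).1
  rw [hc.periodic_b 0, (hc.plus 0).1] at h
  exact Bool.noConfusion h

lemma shift (hc : IsAltCycle A B k a b) (i : ℕ) :
    IsAltCycle A B k (fun t => a (i + t)) (fun t => b (i + t)) where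
  periodic_b t := by simpa only [add_assoc] using hc.periodic_b (i + t)
  plus t := hc.plus (i + t)
  minus t := hc.minus (i + t)

lemma shortcut (hc : IsAltCycle A B (k + 1) a b) (hk : 2 ≤ k) {r : Fin n}
    (hr : A r (b 0) = true ∧ B r (b 0) = false) (hr' : A r (b 2) = false ∧ B r (b 2) = true) :
    IsAltCycle A B k (fun t => if t % k = 0 then r else a (t % k + 1))
      (fun t => if t % k = 0 then b 0 else b (t % k + 1)) where
  periodic_b t := by simp only [Nat.add_mod_right]
  plus t := by
    split_ifs
    · exact hr
    · exact hc.plus _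
  minus t := by
    have hlt := Nat.mod_lt t (show 0 < k by omega)
    have hsucc : (t + 1) % k = if t % k + 1 = k then 0 else t % k + 1 := by
      rw [Nat.add_mod, Nat.one_mod_eq_one.mpr (by omega)]
      split_ifs with h
      · rw [h, Nat.mod_self]
      · exact Nat.mod_eq_of_lt (by omega)
    rcases Nat.eq_zero_or_pos (t % k) with h0 | h0
    · simpa [h0, hsucc, show 1 ≠ k by omega] using hr'
    · by_cases hend : t % k + 1 = k
      · have hwrap : b (k + 1) = b 0 := by simpa using hc.periodic_b 0
        simpa [h0.ne', hsucc, hend, hwrap] using hc.minus (t % k + 1)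
      · simpa [h0.ne', hsucc, hend] using hc.minus (t % k + 1)

lemma closerSwap_or_diagonal (hA : Realizes A dp dm) (hB : Realizes B dp dm)
    (hc : IsAltCycle A B (k + 1) a b) (hk : 2 ≤ k)
    (ih : ∀ {a' b'}, IsAltCycle A B k a' b' → CloserSwap A B dp dm ∨ CloserSwap B A dp dm) :
    (CloserSwap A B dp dm ∨ CloserSwap B A dp dm) ∨ (a 1 = b 0 ∧ a 0 = b 2) := by
  obtain ⟨hp0A, hp0B⟩ := hc.plus 0
  obtain ⟨hp1A, hp1B⟩ := hc.plus 1
  obtain ⟨hm0A, hm0B⟩ := hc.minus 0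
  obtain ⟨hm1A, hm1B⟩ := hc.minus 1
  -- Everything is decided by the chords `X = (a 1, b 0)` and `Y = (a 0, b 2)`.
  by_cases hYA : A (a 0) (b 2) = true
  · exact .inl <| .inl <| closerSwap_of_twoSwap hA (hB.ne_of_adj hm1B) (hB.ne_of_adj hm0B)
      hp1A hYA hm1A hm0A hp1B hm1B (.inr hm0B)
  by_cases hXB : B (a 1) (b 0) = true
  · exact .inl <| .inr <| closerSwap_of_twoSwap hB (hA.ne_of_adj hp0A) (hA.ne_of_adj hp1A)
      hm0B hXB hp0B hp1B hm0A hp0A (.inr hp1A)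
  simp only [Bool.not_eq_true] at hYA hXB
  by_cases hXA : A (a 1) (b 0) = true
  · exact .inl (ih (hc.shortcut hk ⟨hXA, hXB⟩ (hc.minus 1)))
  by_cases hYB : B (a 0) (b 2) = true
  · exact .inl (ih (hc.shortcut hk (hc.plus 0) ⟨hYA, hYB⟩))
  simp only [Bool.not_eq_true] at hXA hYB
  by_cases hX : a 1 = b 0
  swap
  · exact .inl <| .inl <| closerSwap_of_twoSwap hA (hB.ne_of_adj hm0B) hX
      hp0A hp1A hm0A hXA hp0B hm0B (.inl hp1B)
  by_cases hY : a 0 = b 2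
  swap
  · exact .inl <| .inr <| closerSwap_of_twoSwap hB (hA.ne_of_adj hp1A) hY
      hm1B hm0B hp1B hYB hm1A hp1A (.inl hm0A)
  exact .inr ⟨hX, hY⟩

lemma closerSwap_of_diagonal (hA : Realizes A dp dm) (hc : IsAltCycle A B k a b)
    (h0 : a 1 = b 0 ∧ a 0 = b 2) (h1 : a 2 = b 1 ∧ a 1 = b 3) : CloserSwap A B dp dm := by
  have p0 := hc.plus 0
  have p1 := hc.plus 1
  have p2 := hc.plus 2
  have m0 := hc.minus 0
  have m1 := hc.minus 1
  have m2 := hc.minus 2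
  rw [← h0.1] at p0
  rw [← h1.1] at p1 m0
  rw [← h0.2] at p2 m1
  rw [← h1.2] at m2
  exact closerSwap_of_triangle hA p0.1 p1.1 p2.1 m1.1 m2.1 m0.1 p0.2 p1.2 p2.2 m1.2 m2.2 m0.2

theorem closerSwap (hA : Realizes A dp dm) (hB : Realizes B dp dm) (hk : 2 ≤ k)
    (hc : IsAltCycle A B k a b) : CloserSwap A B dp dm ∨ CloserSwap B A dp dm := by
  induction k using Nat.strong_induction_on generalizing a b with
  | _ k ih =>
  obtain ⟨k, rfl⟩ : ∃ k', k = k' + 1 := ⟨k - 1, by omega⟩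
  obtain rfl | hk := show k = 1 ∨ 2 ≤ k by omega
  · have hm1 := hc.minus 1
    rw [show b (1 + 1) = b 0 from hc.periodic_b 0] at hm1
    exact .inl <| closerSwap_of_twoSwap hA (hB.ne_of_adj (hc.minus 0).2) (hB.ne_of_adj hm1.2)
      (hc.plus 0).1 (hc.plus 1).1 (hc.minus 0).1 hm1.1 (hc.plus 0).2 (hc.minus 0).2
      (.inl (hc.plus 1).2)
  · have ih' := fun {a' b'} (hc' : IsAltCycle A B k a' b') => ih k (by omega) hk hc'
    rcases hc.closerSwap_or_diagonal hA hB hk ih' with h | h0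
    · exact h
    rcases (hc.shift 1).closerSwap_or_diagonal hA hB hk ih' with h | h1
    · exact h
    exact .inl (hc.closerSwap_of_diagonal hA h0 h1)

end IsAltCycle

lemma Function.exists_iterate_eq_self {α : Type*} [Finite α] (f : α → α) (x : α) :
    ∃ y k, 0 < k ∧ f^[k] y = y := by
  obtain ⟨i, j, hij, h⟩ := Finite.exists_ne_map_eq_of_infinite fun t => f^[t] x
  rcases hij.lt_or_gt with hlt | hlt
  · refine ⟨f^[i] x, j - i, by omega, ?_⟩
    rw [← Function.iterate_add_apply, Nat.sub_add_cancel hlt.le]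
    exact h.symm
  · refine ⟨f^[j] x, i - j, by omega, ?_⟩
    rw [← Function.iterate_add_apply, Nat.sub_add_cancel hlt.le]
    exact h

lemma exists_false_true_of_card_eq {ι : Type*} [Fintype ι] {f g : ι → Bool}
    (h : #{i | f i = true} = #{i | g i = true}) {i : ι} (hf : f i = true) (hg : g i = false) :
    ∃ j, f j = false ∧ g j = true := by
  by_contra! hfg
  refine (card_lt_card ((ssubset_iff_of_subset fun j hj => ?_).2 ⟨i, ?_, ?_⟩)).ne' h
  · simp only [mem_filter, mem_univ, true_and] at hj ⊢
    by_contra hfj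
    exact hfg j (by simpa using hfj) hj
  · simpa using hf
  · simp [hg]

section AltCycle

variable {x y : Fin n}

lemma exists_minus_of_plus (hA : Realizes A dp dm) (hB : Realizes B dp dm)
    (h1 : A x y = true) (h2 : B x y = false) : ∃ y', A x y' = false ∧ B x y' = true :=
  exists_false_true_of_card_eq ((hA.2 x).1.trans (hB.2 x).1.symm) h1 h2

lemma exists_plus_of_minus (hA : Realizes A dp dm) (hB : Realizes B dp dm)
    (h1 : A x y = false) (h2 : B x y = true) : ∃ x', A x' y = true ∧ B x' y = false := by
  obtain ⟨x', h⟩ := exists_false_true_of_card_eq ((hB.2 y).2.trans (hA.2 y).2.symm) h2 h1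
  exact ⟨x', h.2, h.1⟩

lemma exists_plus_of_ne (hA : Realizes A dp dm) (hB : Realizes B dp dm) (hne : A ≠ B) :
    ∃ x y, A x y = true ∧ B x y = false := by
  obtain ⟨x, y, hxy⟩ : ∃ x y, A x y ≠ B x y := by
    by_contra! h
    exact hne (funext₂ h)
  rcases Bool.eq_false_or_eq_true (A x y) with h | h
  · exact ⟨x, y, h, by simpa [h] using hxy⟩
  · obtain ⟨x', h'⟩ := exists_plus_of_minus hA hB h (by simpa [h] using hxy)
    exact ⟨x', y, h'⟩

theorem exists_isAltCycle (hA : Realizes A dp dm) (hB : Realizes B dp dm) (hne : A ≠ B) :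
    ∃ k a b, 2 ≤ k ∧ IsAltCycle A B k a b := by
  obtain ⟨x, y, hxy⟩ := exists_plus_of_ne hA hB hne
  have step : ∀ p : {p : Fin n × Fin n // A p.1 p.2 = true ∧ B p.1 p.2 = false},
      ∃ q : {p : Fin n × Fin n // A p.1 p.2 = true ∧ B p.1 p.2 = false},
        A p.1.1 q.1.2 = false ∧ B p.1.1 q.1.2 = true := by
    rintro ⟨⟨x, y⟩, h1, h2⟩
    obtain ⟨y', hy'⟩ := exists_minus_of_plus hA hB h1 h2
    obtain ⟨x', hx'⟩ := exists_plus_of_minus hA hB hy'.1 hy'.2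
    exact ⟨⟨(x', y'), hx'⟩, hy'⟩
  choose next hnext using step
  obtain ⟨p, k, hk, hp⟩ := Function.exists_iterate_eq_self next ⟨(x, y), hxy⟩
  have hper : Function.Periodic (fun t => next^[t] p) k := fun t => by
    simp only [Function.iterate_add_apply, hp]
  have hc : IsAltCycle A B k (fun t => (next^[t] p).1.1) (fun t => (next^[t] p).1.2) :=
    { periodic_b := fun t => by simp only [hper t]
      plus := fun t => (next^[t] p).2
      minus := fun t => by simpa only [Function.iterate_succ_apply'] using hnext _ }
  exact ⟨k, _, _, hc.two_le hk, hc⟩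

end AltCycle

lemma Realizes.hammingDist_false (hE : Realizes E dp dm) :
    hammingDist (Function.uncurry E) (fun _ => false) = ∑ v, dp v := by
  simp only [hammingDist, ne_eq, Bool.not_eq_false, card_filter, Fintype.sum_prod_type,
    Function.uncurry_apply_pair]
  exact sum_congr rfl fun v _ => by rw [← (hE.2 v).1, outDeg, card_filter]; rfl

lemma edgeDist_le_two_mul_sum (hA : Realizes A dp dm) (hB : Realizes B dp dm) :
    edgeDist A B ≤ 2 * ∑ v, dp v := by
  calc edgeDist A B
      ≤ hammingDist (Function.uncurry A) (fun _ => false) +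
          hammingDist (fun _ => false) (Function.uncurry B) := hammingDist_triangle _ _ _
    _ = 2 * ∑ v, dp v := by
      rw [hammingDist_comm (fun _ => false), hA.hammingDist_false, hB.hammingDist_false, two_mul]

def JoinedBySwaps (dp dm : Fin n → ℕ) (m : ℕ) (E E' : Fin n → Fin n → Bool) : Prop :=
  ∃ f : Fin (m + 1) → Fin n → Fin n → Bool, f 0 = E ∧ f (Fin.last m) = E' ∧
    (∀ j, Realizes (f j) dp dm) ∧ ∀ j : Fin m, Swap (f j.castSucc) (f j.succ)

namespace JoinedBySwaps

variable {m : ℕ}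

lemma refl (hE : Realizes E dp dm) : JoinedBySwaps dp dm 0 E E :=
  ⟨fun _ => E, rfl, rfl, fun _ => hE, fun j => j.elim0⟩

lemma cons (hE : Realizes E dp dm) (hs : Swap E E') (h : JoinedBySwaps dp dm m E' E'') :
    JoinedBySwaps dp dm (m + 1) E E'' := by
  obtain ⟨f, h0, hl, hf, hsw⟩ := h
  refine ⟨Fin.cons E f, rfl, by rwa [← Fin.succ_last, Fin.cons_succ], Fin.cases hE hf,
    Fin.cases ?_ fun j => ?_⟩
  · simpa [h0] using hs
  · simpa [← Fin.succ_castSucc] using hsw j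

lemma snoc (h : JoinedBySwaps dp dm m E E') (hs : Swap E' E'') (hE : Realizes E'' dp dm) :
    JoinedBySwaps dp dm (m + 1) E E'' := by
  obtain ⟨f, h0, hl, hf, hsw⟩ := h
  refine ⟨Fin.snoc f E'', by rwa [← Fin.castSucc_zero, Fin.snoc_castSucc], Fin.snoc_last _ _,
    Fin.lastCases (by rwa [Fin.snoc_last]) (fun j => by rw [Fin.snoc_castSucc]; exact hf j),
    Fin.lastCases ?_ fun j => ?_⟩
  · simpa [hl] using hs
  · rw [Fin.succ_castSucc, Fin.snoc_castSucc, Fin.snoc_castSucc]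
    exact hsw j

end JoinedBySwaps

theorem exists_joinedBySwaps (hA : Realizes A dp dm) (hB : Realizes B dp dm) :
    ∃ m ≤ edgeDist A B, JoinedBySwaps dp dm m A B := by
  induction hd : edgeDist A B using Nat.strong_induction_on generalizing A B with
  | _ d ih =>
  by_cases hAB : A = B
  · subst hAB
    exact ⟨0, Nat.zero_le _, .refl hA⟩
  obtain ⟨k, a, b, hk, hc⟩ := exists_isAltCycle hA hB hAB
  rcases hc.closerSwap hA hB hk with ⟨A', hs, hA', hlt⟩ | ⟨B', hs, hB', hlt⟩
  · obtain ⟨m, hm, h⟩ := ih _ (hd ▸ hlt) hA' hB rfl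
    exact ⟨m + 1, by omega, .cons hA hs h⟩
  · rw [edgeDist_comm B', edgeDist_comm B] at hlt
    obtain ⟨m, hm, h⟩ := ih _ (hd ▸ hlt) hA hB' rfl
    exact ⟨m + 1, by omega, h.snoc hs.symm hB⟩

/-- Any two realizations of the same bi-degree sequence with `e` edges in
total are connected by at most `2e` two-edge or three-edge swaps, all
intermediate digraphs realizing the same bi-degree sequence. -/
theorem swap_connected_bounded (n : ℕ) (dp dm : Fin n → ℕ)
    (E₁ E₂ : Fin n → Fin n → Bool)
    (h₁ : Realizes E₁ dp dm) (h₂ : Realizes E₂ dp dm) :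
    ∃ (m : ℕ) (f : Fin (m + 1) → (Fin n → Fin n → Bool)),
      m ≤ 2 * ∑ v, dp v ∧
      f 0 = E₁ ∧ f (Fin.last m) = E₂ ∧
      (∀ j, Realizes (f j) dp dm) ∧
      ∀ j : Fin m, Swap (f j.castSucc) (f j.succ) := by
  obtain ⟨m, hm, f, h0, hl, hf, hs⟩ := exists_joinedBySwaps h₁ h₂
  exact ⟨m, f, hm.trans (edgeDist_le_two_mul_sum h₁ h₂), h0, hl, hf, hs⟩
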